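/- Let H and L be finite-dimensional complex inner product spaces and let S be a unitary operator on H ⊕ L. Then there exists a unitary operator T on H such that for every ξ ∈ H there is a vector v ∈ L with S(ξ ⊕ v) = (Tξ) ⊕ v. That is, the map sending each ξ ∈ H to its transduced vector τ(S, ξ) is a unitary operator on H. -/

import Mathlib

/-!
Write `S = [[A, B], [C, D]]` in block form on `H ⊕ L`. A catalyst for `ξ` is a solution `v` of
`(1 - D) v = C ξ`, and such solutions exist for every `ξ`: if `w ⊥ range (1 - D)` then
`D* w = w`, so the isometry `S⁻¹ = S*` sends `0 ⊕ w` to a vector with `L`-component `w` and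
hence fixes it, and therefore `⟪w, C ξ⟫ = ⟪S⁻¹ (0 ⊕ w), ξ ⊕ 0⟫ = 0`; in finite dimension this
gives `C ξ ∈ range (1 - D)`. Choosing the catalyst linearly in `ξ`, the transduction map
`ξ ↦ A ξ + B v(ξ)` preserves norms by Pythagoras in `H ⊕ L`, so it is unitary as `H` is
finite-dimensional.
-/

open scoped InnerProductSpace

theorem LinearMap.exists_comp_eq_of_range_le {K V W U : Type*} [DivisionRing K]
    [AddCommGroup V] [Module K V] [AddCommGroup W] [Module K W] [AddCommGroup U] [Module K U]
    (f : V →ₗ[K] W) (g : U →ₗ[K] W) (h : range g ≤ range f) : ∃ k : U →ₗ[K] V, f ∘ₗ k = g := by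
  obtain ⟨k, hk⟩ := Module.projective_lifting_property f.rangeRestrict
    (g.codRestrict (range f) fun u ↦ h (mem_range_self g u)) f.surjective_rangeRestrict
  exact ⟨k, by ext u; exact congr_arg Subtype.val congr($hk u)⟩

namespace WithLp

variable {α β : Type*} [NormedAddCommGroup α] [SeminormedAddCommGroup β]

theorem eq_toLp_zero_snd_of_norm_le (x : WithLp 2 (α × β)) (h : ‖x‖ ≤ ‖x.snd‖) :
    x = toLp 2 (0, x.snd) := by
  have hsq := prod_norm_sq_eq_of_L2 x
  have hfst : ‖x.fst‖ ^ 2 = 0 := by nlinarith [norm_nonneg x, sq_nonneg ‖x.fst‖]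
  rw [← norm_eq_zero.mp (pow_eq_zero_iff two_ne_zero |>.mp hfst)]
  rfl

end WithLp

namespace LinearIsometryEquiv

open LinearMap (range mem_range_self)
open WithLp

noncomputable section

variable {𝕜 H L : Type*} [RCLike 𝕜] [NormedAddCommGroup H] [InnerProductSpace 𝕜 H]
  [NormedAddCommGroup L] [InnerProductSpace 𝕜 L] (S : WithLp 2 (H × L) ≃ₗᵢ[𝕜] WithLp 2 (H × L))

/- `blockLH = C` and `blockLL = D` in the block form `S = [[A, B], [C, D]]`. -/
def blockLH : H →ₗ[𝕜] L :=
  sndₗ 2 𝕜 H L ∘ₗ S.toLinearMap ∘ₗ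
    (WithLp.linearEquiv 2 𝕜 (H × L)).symm.toLinearMap ∘ₗ LinearMap.inl 𝕜 H L

def blockLL : L →ₗ[𝕜] L :=
  sndₗ 2 𝕜 H L ∘ₗ S.toLinearMap ∘ₗ
    (WithLp.linearEquiv 2 𝕜 (H × L)).symm.toLinearMap ∘ₗ LinearMap.inr 𝕜 H L

theorem blockLH_apply (ξ : H) : S.blockLH ξ = (S (toLp 2 (ξ, 0))).snd := rfl

theorem blockLL_apply (v : L) : S.blockLL v = (S (toLp 2 (0, v))).snd := rfl

theorem snd_apply_toLp_eq_self_iff (ξ : H) (v : L) :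
    (S (toLp 2 (ξ, v))).snd = v ↔ S.blockLH ξ = (1 - S.blockLL) v := by
  have hsplit : toLp 2 (ξ, v) = toLp 2 (ξ, (0 : L)) + toLp 2 ((0 : H), v) := by
    rw [← toLp_add, Prod.mk_add_mk, add_zero, zero_add]
  rw [hsplit, map_add, add_snd, ← blockLH_apply, ← blockLL_apply, LinearMap.sub_apply,
    Module.End.one_apply, eq_sub_iff_add_eq]

theorem symm_apply_toLp_zero_of_mem_orthogonal {w : L} (hw : w ∈ (range (1 - S.blockLL))ᗮ) :
    S.symm (toLp 2 (0, w)) = toLp 2 (0, w) := by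
  have hsnd : (S.symm (toLp 2 (0, w))).snd = w := by
    refine ext_inner_right 𝕜 fun v ↦ ?_
    have hv : ⟪v - S.blockLL v, w⟫_𝕜 = 0 :=
      (Submodule.mem_orthogonal _ _).mp hw _ (mem_range_self _ v)
    calc ⟪(S.symm (toLp 2 (0, w))).snd, v⟫_𝕜 = ⟪S.symm (toLp 2 (0, w)), toLp 2 (0, v)⟫_𝕜 := by
          simp
      _ = ⟪w, S.blockLL v⟫_𝕜 := by
          rw [inner_map_eq_flip, symm_symm]; simp [blockLL_apply]
      _ = ⟪w, v⟫_𝕜 := by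
          rw [inner_sub_left, sub_eq_zero] at hv
          rw [← inner_conj_symm, ← hv, inner_conj_symm]
  conv_rhs => rw [← hsnd]
  refine eq_toLp_zero_snd_of_norm_le _ ?_
  rw [norm_map, hsnd, norm_toLp_snd]

theorem range_blockLH_le [FiniteDimensional 𝕜 L] : range S.blockLH ≤ range (1 - S.blockLL) := by
  rintro _ ⟨ξ, rfl⟩
  rw [← Submodule.orthogonal_orthogonal (range (1 - S.blockLL))]
  intro w hw
  calc ⟪w, S.blockLH ξ⟫_𝕜 = ⟪S.symm (toLp 2 (0, w)), toLp 2 (ξ, 0)⟫_𝕜 := by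
        rw [inner_map_eq_flip, symm_symm]; simp [blockLH_apply]
    _ = 0 := by
        rw [S.symm_apply_toLp_zero_of_mem_orthogonal hw]; simp

theorem exists_linearMap_snd_apply_toLp_eq [FiniteDimensional 𝕜 L] :
    ∃ V : H →ₗ[𝕜] L, ∀ ξ, (S (toLp 2 (ξ, V ξ))).snd = V ξ := by
  obtain ⟨V, hV⟩ := LinearMap.exists_comp_eq_of_range_le _ _ S.range_blockLH_le
  exact ⟨V, fun ξ ↦ (S.snd_apply_toLp_eq_self_iff ξ (V ξ)).mpr congr($hV ξ).symm⟩

theorem norm_fst_apply_toLp_of_snd_eq {ξ : H} {v : L} (h : (S (toLp 2 (ξ, v))).snd = v) :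
    ‖(S (toLp 2 (ξ, v))).fst‖ = ‖ξ‖ := by
  have hsq := prod_norm_sq_eq_of_L2 (S (toLp 2 (ξ, v)))
  rw [norm_map, prod_norm_sq_eq_of_L2, h] at hsq
  simp only [toLp_fst, toLp_snd, add_left_inj] at hsq
  exact (sq_eq_sq₀ (norm_nonneg _) (norm_nonneg _)).mp hsq.symm

variable {S} in
def transductionMap (V : H →ₗ[𝕜] L) (hV : ∀ ξ, (S (toLp 2 (ξ, V ξ))).snd = V ξ) :
    H →ₗᵢ[𝕜] H where
  toLinearMap := fstₗ 2 𝕜 H L ∘ₗ S.toLinearMap ∘ₗ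
    (WithLp.linearEquiv 2 𝕜 (H × L)).symm.toLinearMap ∘ₗ LinearMap.id.prod V
  norm_map' ξ := S.norm_fst_apply_toLp_of_snd_eq (hV ξ)

theorem apply_toLp_eq_toLp_transductionMap (V : H →ₗ[𝕜] L)
    (hV : ∀ ξ, (S (toLp 2 (ξ, V ξ))).snd = V ξ) (ξ : H) :
    S (toLp 2 (ξ, V ξ)) = toLp 2 (transductionMap V hV ξ, V ξ) := by
  conv_rhs => rw [← hV ξ]
  rfl

end

end LinearIsometryEquiv

theorem transduction_map_unitary
    {H L : Type*}
    [NormedAddCommGroup H] [InnerProductSpace ℂ H] [FiniteDimensional ℂ H]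
    [NormedAddCommGroup L] [InnerProductSpace ℂ L] [FiniteDimensional ℂ L]
    (S : WithLp 2 (H × L) ≃ₗᵢ[ℂ] WithLp 2 (H × L)) :
    ∃ T : H ≃ₗᵢ[ℂ] H, ∀ ξ : H, ∃ v : L,
      S ((WithLp.equiv 2 (H × L)).symm (ξ, v)) = (WithLp.equiv 2 (H × L)).symm (T ξ, v) := by
  obtain ⟨V, hV⟩ := S.exists_linearMap_snd_apply_toLp_eq
  exact ⟨(LinearIsometryEquiv.transductionMap V hV).toLinearIsometryEquiv rfl,
    fun ξ ↦ ⟨V ξ, S.apply_toLp_eq_toLp_transductionMap V hV ξ⟩⟩
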